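/- If M is a symmetric positive definite real n×n matrix, then there exists a lower triangular matrix L with positive diagonal entries such that M = L * Lᵀ (Cholesky decomposition). -/

import Mathlib

/-!
The LDL decomposition (`LDL.lower_conj_diag`) writes `S = L D Lᴴ` with `L` lower triangular
and invertible and `D` diagonal; `D` is positive definite, being a congruent of `S`, so
`K = L √D` is lower triangular with nonzero diagonal and `K Kᵀ = S`. Multiplying the columns of `K` by the signs of its diagonal
entries leaves `K Kᵀ` unchanged and makes the diagonal positive.
-/

open Matrix

section LowerTriangular

variable {m : Type*} [Fintype m] [LinearOrder m]

theorem Matrix.IsLowerTriangular.diag_ne_zero {R : Type*} [CommRing R] [Nontrivial R]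
    {L : Matrix m m R} (hL : L.IsLowerTriangular) (hdet : IsUnit L.det) (i : m) :
    L i i ≠ 0 := fun hi =>
  hdet.ne_zero <| by
    rw [det_of_isLowerTriangular L hL]
    exact Finset.prod_eq_zero (Finset.mem_univ i) hi

variable {R : Type*} [CommRing R] [LinearOrder R] [IsStrictOrderedRing R]

theorem Matrix.IsLowerTriangular.exists_pos_diag_mul_transpose_eq {L : Matrix m m R}
    (hL : L.IsLowerTriangular) (hdiag : ∀ i, L i i ≠ 0) :
    ∃ L' : Matrix m m R, L'.IsLowerTriangular ∧ (∀ i, 0 < L' i i) ∧ L' * L'ᵀ = L * Lᵀ := by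
  set s : m → R := fun i => SignType.sign (L i i)
  have hs : ∀ i, s i * s i = 1 := fun i => by
    rw [← SignType.coe_mul, ← sign_mul, sign_pos (mul_self_pos.mpr (hdiag i)), SignType.coe_one]
  refine ⟨L * diagonal s, hL.mul (blockTriangular_diagonal s), fun i => ?_, ?_⟩
  · rw [mul_diagonal, self_mul_sign]
    exact abs_pos.mpr (hdiag i)
  · rw [transpose_mul, diagonal_transpose, Matrix.mul_assoc, ← Matrix.mul_assoc (diagonal s),
      diagonal_mul_diagonal, funext hs, diagonal_one, Matrix.one_mul]

end LowerTriangular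

namespace LDL

open scoped ComplexOrder

variable {𝕜 : Type*} [RCLike 𝕜] {n : Type*} [Fintype n] [LinearOrder n] [WellFoundedLT n]
  [LocallyFiniteOrderBot n] {S : Matrix n n 𝕜} (hS : S.PosDef)

theorem lowerInv_isLowerTriangular : (lowerInv hS).IsLowerTriangular :=
  fun _ _ h => lowerInv_triangular hS h

theorem lower_isLowerTriangular : (lower hS).IsLowerTriangular :=
  blockTriangular_inv_of_blockTriangular (lowerInv_isLowerTriangular hS)

theorem isUnit_det_lower : IsUnit (lower hS).det :=
  isUnit_nonsing_inv_det _ (isUnit_det_of_invertible _)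

theorem posDef_diag : (diag hS).PosDef := by
  rw [diag_eq_lowerInv_conj]
  exact hS.mul_mul_conjTranspose_same (vecMul_injective_of_isUnit (isUnit_of_invertible _))

theorem diagEntries_pos (i : n) : 0 < diagEntries hS i := by
  simpa [diag] using (posDef_diag hS).diag_pos (i := i)

end LDL

theorem Matrix.PosDef.exists_isLowerTriangular_mul_transpose_eq {n : Type*} [Fintype n]
    [LinearOrder n] [WellFoundedLT n] [LocallyFiniteOrderBot n] {S : Matrix n n ℝ}
    (hS : S.PosDef) :
    ∃ L : Matrix n n ℝ, L.IsLowerTriangular ∧ (∀ i, 0 < L i i) ∧ L * Lᵀ = S := by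
  set r : n → ℝ := fun i => √(LDL.diagEntries hS i)
  have hr : ∀ i, 0 < r i := fun i => Real.sqrt_pos.mpr (LDL.diagEntries_pos hS i)
  have hL : (LDL.lower hS * diagonal r).IsLowerTriangular :=
    (LDL.lower_isLowerTriangular hS).mul (blockTriangular_diagonal r)
  obtain ⟨L, hLtri, hLpos, hLS⟩ := hL.exists_pos_diag_mul_transpose_eq fun i => by
    rw [mul_diagonal]
    exact mul_ne_zero ((LDL.lower_isLowerTriangular hS).diag_ne_zero (LDL.isUnit_det_lower hS) i)
      (hr i).ne'
  refine ⟨L, hLtri, hLpos, ?_⟩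
  rw [hLS, transpose_mul, diagonal_transpose, Matrix.mul_assoc, ← Matrix.mul_assoc (diagonal r),
    diagonal_mul_diagonal, ← conjTranspose_eq_transpose_of_trivial, ← Matrix.mul_assoc]
  convert LDL.lower_conj_diag hS using 3
  ext i j
  simp [LDL.diag, diagonal, r, Real.mul_self_sqrt (LDL.diagEntries_pos hS i).le]

/-- Cholesky decomposition: a symmetric positive definite real matrix `M` can be
written as `L * Lᵀ` with `L` lower triangular with positive diagonal entries. -/
theorem cholesky_decomposition {n : ℕ} (M : Matrix (Fin n) (Fin n) ℝ)
    (hsymm : Mᵀ = M)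
    (hpos : ∀ x : Fin n → ℝ, x ≠ 0 → 0 < x ⬝ᵥ M.mulVec x) :
    ∃ L : Matrix (Fin n) (Fin n) ℝ,
      (∀ i j : Fin n, i < j → L i j = 0) ∧ (∀ i : Fin n, 0 < L i i) ∧ M = L * Lᵀ := by
  have hM : M.PosDef := .of_dotProduct_mulVec_pos (by simpa [IsHermitian] using hsymm)
    fun x hx => by simpa using hpos x hx
  obtain ⟨L, hLtri, hLpos, hLM⟩ := hM.exists_isLowerTriangular_mul_transpose_eq
  exact ⟨L, fun i j hij => hLtri hij, hLpos, hLM.symm⟩
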